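/- arXiv:math/0102018 — 4 statements merged into one kernel-verified Lean document; each statement's English description precedes it below -/
import Mathlib

section
/- Let A : D(A) ⊆ H → H be a densely defined self-adjoint injective operator on a complex Hilbert space H, and let (ε_n) be any sequence of nonzero real numbers converging to 0. Then for every φ ∈ H one has −A·R(iε_n)φ → φ in H as n → ∞, where R(iε_n) := (−A + iε_n)^{−1} (which exists and is bounded since A is self-adjoint and ε_n ≠ 0). -/
/-!
Writing `z = iε`, the resolvent identity gives `-A R(z) = 1 - z R(z)`, so it suffices that
`z R(z) φ → 0`. Self-adjointness makes `⟪A x, x⟫` real, hence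
`‖(-A + z) x‖² = ‖A x‖² + ε² ‖x‖²`, and the operators `z R(z)` have norm at most `1`.
On the range of `A` one has `z R(z) A x = z (-x + z R(z) x) = O(ε)`, and this range is dense
because its orthogonal complement is `ker A* = ker A = 0`. A uniformly bounded family of
operators that converges on a dense set converges everywhere.
-/

open Complex Filter Topology
open scoped InnerProductSpace ComplexConjugate

noncomputable section

namespace SingPert

/-- `R` is the (everywhere defined, bounded) resolvent `(-A + z)⁻¹` of `A` at `z`. -/
structure IsResolvent {H : Type*} [NormedAddCommGroup H] [InnerProductSpace ℂ H]
    (A : H →ₗ.[ℂ] H) (z : ℂ) (R : H →L[ℂ] H) : Prop where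
  mem : ∀ ψ : H, R ψ ∈ A.domain
  left : ∀ ψ : H, -A ⟨R ψ, mem ψ⟩ + z • R ψ = ψ
  right : ∀ φ : A.domain, R (-A φ + z • (φ : H)) = (φ : H)

end SingPert

theorem ContinuousLinearMap.tendsto_apply_zero_of_norm_le_of_dense {ι 𝕜 E F : Type*}
    [NontriviallyNormedField 𝕜] [SeminormedAddCommGroup E] [SeminormedAddCommGroup F]
    [NormedSpace 𝕜 E] [NormedSpace 𝕜 F] {l : Filter ι} (T : ι → E →L[𝕜] F) {C : ℝ}
    (hT : ∀ i x, ‖T i x‖ ≤ C * ‖x‖) {s : Set E} (hs : Dense s)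
    (hsT : ∀ y ∈ s, Tendsto (T · y) l (𝓝 0)) (x : E) : Tendsto (T · x) l (𝓝 0) :=
  have hequi : Equicontinuous ((↑) ∘ T) :=
    ((NormedSpace.equicontinuous_TFAE T).out 3 1).mp (⟨C, hT⟩ : ∃ C, ∀ i x, ‖T i x‖ ≤ C * ‖x‖)
  (hequi x).tendsto_of_mem_closure tendsto_const_nhds hsT (hs x)

namespace LinearPMap

variable {𝕜 E F : Type*} [RCLike 𝕜] [NormedAddCommGroup E] [InnerProductSpace 𝕜 E]
  [NormedAddCommGroup F] [InnerProductSpace 𝕜 F]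

theorem exists_mem_adjoint_domain_adjoint_eq_zero [CompleteSpace E] {T : E →ₗ.[𝕜] F}
    (hT : Dense (T.domain : Set E)) {y : F} (hy : ∀ x : T.domain, ⟪y, T x⟫_𝕜 = 0) :
    ∃ hy' : y ∈ T†.domain, T† ⟨y, hy'⟩ = 0 := by
  have hzero : ∀ x : T.domain, ⟪(0 : E), x⟫_𝕜 = ⟪y, T x⟫_𝕜 := fun x => by
    rw [inner_zero_left, hy x]
  exact ⟨mem_adjoint_domain_of_exists y ⟨0, hzero⟩, adjoint_apply_eq hT _ hzero⟩

theorem IsFormalAdjoint.im_inner_self_eq_zero {A : E →ₗ.[𝕜] E} (hA : A.IsFormalAdjoint A)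
    (x : A.domain) : RCLike.im ⟪A x, (x : E)⟫_𝕜 = 0 := by
  rw [← RCLike.conj_eq_iff_im, inner_conj_symm, hA x x]

theorem IsFormalAdjoint.norm_smul_le_norm_neg_add_smul {H : Type*} [NormedAddCommGroup H]
    [InnerProductSpace ℂ H] {A : H →ₗ.[ℂ] H} (hA : A.IsFormalAdjoint A) (x : A.domain) (t : ℝ) :
    ‖(I * t) • (x : H)‖ ≤ ‖-A x + (I * t) • (x : H)‖ := by
  have hre : RCLike.re ⟪-A x, (I * t) • (x : H)⟫_ℂ = 0 := by
    have him : (⟪A x, (x : H)⟫_ℂ).im = 0 := hA.im_inner_self_eq_zero x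
    rw [RCLike.re_to_complex, inner_smul_right, inner_neg_left]
    simp [Complex.mul_re, Complex.mul_im, him]
  refine (sq_le_sq₀ (norm_nonneg _) (norm_nonneg _)).mp ?_
  rw [norm_add_sq (𝕜 := ℂ), hre]
  nlinarith [sq_nonneg ‖-A x‖]

end LinearPMap

theorem IsSelfAdjoint.isFormalAdjoint {𝕜 E : Type*} [RCLike 𝕜] [NormedAddCommGroup E]
    [InnerProductSpace 𝕜 E] [CompleteSpace E] {A : E →ₗ.[𝕜] E} (hA : IsSelfAdjoint A) :
    A.IsFormalAdjoint A := by
  have h := LinearPMap.adjoint_isFormalAdjoint hA.dense_domain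
  rwa [LinearPMap.isSelfAdjoint_def.mp hA] at h

theorem IsSelfAdjoint.denseRange {𝕜 E : Type*} [RCLike 𝕜] [NormedAddCommGroup E]
    [InnerProductSpace 𝕜 E] [CompleteSpace E] {A : E →ₗ.[𝕜] E} (hA : IsSelfAdjoint A)
    (hA0 : ∀ x : A.domain, A x = 0 → (x : E) = 0) : DenseRange A := by
  suffices h : (LinearMap.range A.toFun)ᗮ = ⊥ by
    change Dense (LinearMap.range A.toFun : Set E)
    rwa [Submodule.dense_iff_topologicalClosure_eq_top, Submodule.topologicalClosure_eq_top_iff]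
  refine (Submodule.eq_bot_iff _).mpr fun y hy => ?_
  have hker := LinearPMap.exists_mem_adjoint_domain_adjoint_eq_zero hA.dense_domain
    fun x => Submodule.inner_left_of_mem_orthogonal (LinearMap.mem_range_self A.toFun x) hy
  rw [LinearPMap.isSelfAdjoint_def.mp hA] at hker
  obtain ⟨hy', hAy⟩ := hker
  exact hA0 ⟨y, hy'⟩ hAy

namespace SingPert

section

variable {H : Type*} [NormedAddCommGroup H] [InnerProductSpace ℂ H] {A : H →ₗ.[ℂ] H}
  {z : ℂ} {R : H →L[ℂ] H}

theorem IsResolvent.neg_apply_eq (hR : IsResolvent A z R) (φ : H) :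
    -A ⟨R φ, hR.mem φ⟩ = φ - z • R φ :=
  eq_sub_of_add_eq (hR.left φ)

theorem IsResolvent.apply_map_eq (hR : IsResolvent A z R) (x : A.domain) :
    R (A x) = -(x : H) + z • R x := by
  have h := hR.right (-x)
  rw [LinearPMap.map_neg, neg_neg, Submodule.coe_neg, smul_neg, ← sub_eq_add_neg, map_sub,
    map_smul] at h
  rw [← h]
  abel

theorem IsResolvent.norm_I_mul_smul_apply_le {t : ℝ} (hA : A.IsFormalAdjoint A)
    (hR : IsResolvent A (I * t) R) (ψ : H) : ‖(I * t) • R ψ‖ ≤ ‖ψ‖ := by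
  simpa only [hR.left ψ] using hA.norm_smul_le_norm_neg_add_smul ⟨R ψ, hR.mem ψ⟩ t

theorem tendsto_smul_resolvent_apply_map {ι : Type*} {l : Filter ι} {z : ι → ℂ}
    {R : ι → H →L[ℂ] H} (hR : ∀ i, IsResolvent A (z i) (R i))
    (hbound : ∀ i ψ, ‖z i • R i ψ‖ ≤ ‖ψ‖) (hz : Tendsto z l (𝓝 0)) (x : A.domain) :
    Tendsto (fun i => z i • R i (A x)) l (𝓝 0) := by
  have hle : ∀ i, ‖z i • R i (A x)‖ ≤ 2 * ‖z i‖ * ‖(x : H)‖ := fun i => by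
    rw [(hR i).apply_map_eq, smul_add, smul_neg]
    calc ‖-(z i • (x : H)) + z i • z i • R i x‖
        ≤ ‖z i • (x : H)‖ + ‖z i‖ * ‖z i • R i x‖ := by
          rw [← norm_smul (z i)]; exact norm_add_le_of_le (norm_neg _).le le_rfl
      _ ≤ ‖z i‖ * ‖(x : H)‖ + ‖z i‖ * ‖(x : H)‖ := by
          rw [norm_smul]; gcongr; exact hbound i x
      _ = 2 * ‖z i‖ * ‖(x : H)‖ := by ring
  refine squeeze_zero_norm hle ?_
  simpa using ((hz.norm.const_mul 2).mul_const ‖(x : H)‖)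

end

theorem neg_A_resolvent_tendsto_id_general
    {H : Type*} [NormedAddCommGroup H] [InnerProductSpace ℂ H] [CompleteSpace H]
    (A : H →ₗ.[ℂ] H) (hA : IsSelfAdjoint A)
    (hinj : ∀ φ : A.domain, A φ = 0 → (φ : H) = 0)
    (ε : ℕ → ℝ) (hεlim : Filter.Tendsto ε Filter.atTop (nhds 0))
    (R : ℕ → H →L[ℂ] H) (hR : ∀ n, IsResolvent A (Complex.I * (ε n : ℂ)) (R n))
    (φ : H) :
    Filter.Tendsto (fun n => -A ⟨R n φ, (hR n).mem φ⟩) Filter.atTop (nhds φ) := by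
  have hbound : ∀ n ψ, ‖(I * ε n) • R n ψ‖ ≤ ‖ψ‖ := fun n =>
    (hR n).norm_I_mul_smul_apply_le hA.isFormalAdjoint
  have hz : Tendsto (fun n => I * (ε n : ℂ)) atTop (𝓝 0) := by
    simpa using (Complex.continuous_ofReal.tendsto 0 |>.comp hεlim).const_mul I
  have hsmall : Tendsto (fun n => (I * ε n) • R n φ) atTop (𝓝 0) :=
    ContinuousLinearMap.tendsto_apply_zero_of_norm_le_of_dense (fun n => (I * ε n) • R n)
      (C := 1) (fun n ψ => by simpa using hbound n ψ) (hA.denseRange hinj)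
      (by rintro _ ⟨x, rfl⟩; exact tendsto_smul_resolvent_apply_map hR hbound hz x) φ
  simp_rw [(hR _).neg_apply_eq]
  simpa using tendsto_const_nhds.sub hsmall

/-- If `A` is a densely defined self-adjoint injective operator and
`(ε n)` is a sequence of nonzero reals converging to `0`, then for every `φ ∈ H`
one has `-A (R(i ε n) φ) → φ` in `H`, where `R(i ε n) = (-A + i ε n)⁻¹`. -/
theorem neg_A_resolvent_tendsto_id
    {H : Type*} [NormedAddCommGroup H] [InnerProductSpace ℂ H] [CompleteSpace H]
    (A : H →ₗ.[ℂ] H) (hA : IsSelfAdjoint A)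
    (hinj : ∀ φ : A.domain, A φ = 0 → (φ : H) = 0)
    (ε : ℕ → ℝ) (hε0 : ∀ n, ε n ≠ 0) (hεlim : Filter.Tendsto ε Filter.atTop (nhds 0))
    (R : ℕ → H →L[ℂ] H) (hR : ∀ n, IsResolvent A (Complex.I * (ε n : ℂ)) (R n))
    (φ : H) :
    Filter.Tendsto (fun n => -A ⟨R n φ, (hR n).mem φ⟩) Filter.atTop (nhds φ) :=
  neg_A_resolvent_tendsto_id_general A hA hinj ε hεlim R hR φ

end SingPert
end
end

section
/- Let A : D(A) ⊆ H → H be a densely defined self-adjoint injective operator, and let (ε_n) be a sequence of nonzero real numbers converging to 0. Then for every φ ∈ H the sequence (R(iε_n)φ) in D(A) is Cauchy with respect to the norm ‖ψ‖_(A) := ‖Aψ‖_H; its limit Rφ in the completion D̂(A) does not depend on the choice of the sequence (ε_n); and the resulting linear map R : H → D̂(A) is bounded. -/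
/-!
For `ψ = R(iε)φ` one has `Aψ = iεψ - φ`, and symmetry of `A` gives `‖iε R(iε)‖ ≤ 1`. On the range
of `A`, which is dense because `A` is self-adjoint and injective, `iε R(iε) Aχ = O(ε)`; by
equicontinuity `iε R(iε_n) φ → 0` for every `φ`, i.e. `A R(iε_n) φ → -φ` in `H`. Since
`‖𝓘 ψ‖ = ‖A ψ‖`, the map `Aχ ↦ 𝓘 χ` extends to a bounded `J : H → D̂(A)`, and
`𝓘 R(iε_n) φ = J (A R(iε_n) φ) → -J φ`, whatever the sequence `(ε_n)`.
-/

open Complex Filter Topology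
open scoped InnerProductSpace ComplexConjugate

noncomputable section

namespace SingPert

section Resolvent

variable {H : Type*} [NormedAddCommGroup H] [InnerProductSpace ℂ H]

namespace IsResolvent

variable {A : H →ₗ.[ℂ] H} {z : ℂ} {R : H →L[ℂ] H}

theorem apply_domain_eq (hR : IsResolvent A z R) (φ : H) :
    (A ⟨R φ, hR.mem φ⟩ : H) = z • R φ - φ :=
  eq_sub_of_add_eq (neg_add_eq_iff_eq_add.mp (hR.left φ)).symm

theorem apply_apply_eq (hR : IsResolvent A z R) (χ : A.domain) :
    R (A χ) = -(χ : H) + z • R χ := by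
  have h : (A χ : H) = -(-A χ + z • (χ : H)) + z • (χ : H) := by abel
  rw [h, map_add, map_neg, hR.right χ, map_smul]

end IsResolvent

variable {A : H →ₗ.[ℂ] H}

theorem _root_.LinearPMap.IsFormalAdjoint.norm_I_mul_smul_le (hsym : A.IsFormalAdjoint A)
    (ε : ℝ) (ψ : A.domain) : ‖(I * ε) • (ψ : H)‖ ≤ ‖-A ψ + (I * ε) • (ψ : H)‖ := by
  have hreal : (⟪(A ψ : H), (ψ : H)⟫_ℂ).im = 0 := by
    have h : ⟪(A ψ : H), (ψ : H)⟫_ℂ = conj ⟪(A ψ : H), (ψ : H)⟫_ℂ :=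
      (hsym ψ ψ).trans (inner_conj_symm _ _).symm
    exact Complex.conj_eq_iff_im.mp h.symm
  have hcross : re ⟪-(A ψ : H), (I * ε) • (ψ : H)⟫_ℂ = 0 := by
    simp [hreal]
  refine (sq_le_sq₀ (norm_nonneg _) (norm_nonneg _)).mp ?_
  rw [norm_add_sq (𝕜 := ℂ), RCLike.re_to_complex, hcross]
  nlinarith [sq_nonneg ‖-(A ψ : H)‖]

theorem IsResolvent.norm_smul_apply_le (hsym : A.IsFormalAdjoint A) {ε : ℝ} {R : H →L[ℂ] H}
    (hR : IsResolvent A (I * ε) R) (φ : H) : ‖(I * ε) • R φ‖ ≤ ‖φ‖ := by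
  simpa only [hR.left φ] using hsym.norm_I_mul_smul_le ε ⟨R φ, hR.mem φ⟩

variable [CompleteSpace H]

theorem _root_.IsSelfAdjoint.isFormalAdjoint_s3 (hA : IsSelfAdjoint A) : A.IsFormalAdjoint A := by
  simpa only [LinearPMap.isSelfAdjoint_def.mp hA] using
    LinearPMap.adjoint_isFormalAdjoint hA.dense_domain

theorem _root_.IsSelfAdjoint.denseRange_toFun (hA : IsSelfAdjoint A)
    (hinj : ∀ φ : A.domain, A φ = 0 → (φ : H) = 0) : DenseRange A.toFun := by
  rw [DenseRange, ← LinearMap.coe_range, Submodule.dense_iff_topologicalClosure_eq_top,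
    Submodule.topologicalClosure_eq_top_iff, Submodule.eq_bot_iff]
  intro y hy
  have horth : ∀ χ : A.domain, ⟪y, A χ⟫_ℂ = 0 := fun χ =>
    Submodule.inner_left_of_mem_orthogonal (LinearMap.mem_range_self _ χ) hy
  have hy_adj : y ∈ A.adjoint.domain :=
    LinearPMap.mem_adjoint_domain_of_exists y ⟨0, fun χ => by simp [horth χ]⟩
  have hAy : A.adjoint ⟨y, hy_adj⟩ = 0 :=
    LinearPMap.adjoint_apply_eq hA.dense_domain _ fun χ => by simp [horth χ]
  have hker : ∀ B : H →ₗ.[ℂ] H, B = A → ∀ hyB : y ∈ B.domain, B ⟨y, hyB⟩ = 0 → y = 0 := by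
    rintro B rfl hyB hB
    exact hinj _ hB
  exact hker _ (LinearPMap.isSelfAdjoint_def.mp hA) hy_adj hAy

theorem tendsto_smul_resolvent_apply (hA : IsSelfAdjoint A)
    (hinj : ∀ φ : A.domain, A φ = 0 → (φ : H) = 0) {ε : ℕ → ℝ} (hε : Tendsto ε atTop (𝓝 0))
    {R : ℕ → H →L[ℂ] H} (hR : ∀ n, IsResolvent A (I * ε n) (R n)) (φ : H) :
    Tendsto (fun n => (I * ε n) • R n φ) atTop (𝓝 0) := by
  set T : ℕ → H →L[ℂ] H := fun n => (I * ε n) • R n with hT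
  have hbound : ∀ n ψ, ‖T n ψ‖ ≤ 1 * ‖ψ‖ := fun n ψ => by
    simpa [hT] using (hR n).norm_smul_apply_le hA.isFormalAdjoint_s3 ψ
  have hequi : Equicontinuous ((↑) ∘ T) :=
    ((NormedSpace.equicontinuous_TFAE T).out 3 1).mp (by exact ⟨1, hbound⟩)
  have hclosed := hequi.isClosed_setOfPred_tendsto (l := atTop) (f := 0) continuous_const
  have hrange : ∀ χ : A.domain, Tendsto (fun n => T n (A χ)) atTop (𝓝 0) := by
    intro χ
    have hle : ∀ n, ‖T n (A χ)‖ ≤ 2 * ‖(χ : H)‖ * ‖ε n‖ := fun n => calc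
      ‖T n (A χ)‖ = ‖ε n‖ * ‖-(χ : H) + (I * ε n) • R n χ‖ := by
        rw [hT, smul_apply, (hR n).apply_apply_eq, norm_smul, norm_mul,
          Complex.norm_I, one_mul, Complex.norm_real]
      _ ≤ ‖ε n‖ * (‖(χ : H)‖ + ‖(χ : H)‖) := by
        gcongr
        exact (norm_add_le _ _).trans (by
          rw [norm_neg]; gcongr; exact (hR n).norm_smul_apply_le hA.isFormalAdjoint_s3 _)
      _ = 2 * ‖(χ : H)‖ * ‖ε n‖ := by ring
    refine squeeze_zero_norm hle ?_
    simpa using hε.norm.const_mul (2 * ‖(χ : H)‖)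
  exact (hA.denseRange_toFun hinj).induction_on φ hclosed hrange

theorem tendsto_apply_resolvent_apply (hA : IsSelfAdjoint A)
    (hinj : ∀ φ : A.domain, A φ = 0 → (φ : H) = 0) {ε : ℕ → ℝ} (hε : Tendsto ε atTop (𝓝 0))
    {R : ℕ → H →L[ℂ] H} (hR : ∀ n, IsResolvent A (I * ε n) (R n)) (φ : H) :
    Tendsto (fun n => (A ⟨R n φ, (hR n).mem φ⟩ : H)) atTop (𝓝 (-φ)) := by
  simp_rw [fun n => (hR n).apply_domain_eq φ]
  simpa using (tendsto_smul_resolvent_apply hA hinj hε hR φ).sub_const φ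

end Resolvent

theorem resolvent_cauchySeq_and_limit_general
    {H : Type*} [NormedAddCommGroup H] [InnerProductSpace ℂ H] [CompleteSpace H]
    (A : H →ₗ.[ℂ] H) (hA : IsSelfAdjoint A)
    (hinj : ∀ φ : A.domain, A φ = 0 → (φ : H) = 0)
    {Dhat : Type*} [NormedAddCommGroup Dhat] [NormedSpace ℂ Dhat] [CompleteSpace Dhat]
    (iota : A.domain →ₗ[ℂ] Dhat)
    (hiso : ∀ φ : A.domain, ‖iota φ‖ = ‖A φ‖) :
    (∀ (ε : ℕ → ℝ), (∀ n, ε n ≠ 0) → Filter.Tendsto ε Filter.atTop (nhds 0) →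
      ∀ (R : ℕ → H →L[ℂ] H) (hR : ∀ n, IsResolvent A (Complex.I * (ε n : ℂ)) (R n)) (φ : H),
        CauchySeq (fun n => iota ⟨R n φ, (hR n).mem φ⟩)) ∧
    ∃ Rhat : H →L[ℂ] Dhat,
      ∀ (ε : ℕ → ℝ), (∀ n, ε n ≠ 0) → Filter.Tendsto ε Filter.atTop (nhds 0) →
        ∀ (R : ℕ → H →L[ℂ] H) (hR : ∀ n, IsResolvent A (Complex.I * (ε n : ℂ)) (R n)) (φ : H),
          Filter.Tendsto (fun n => iota ⟨R n φ, (hR n).mem φ⟩) Filter.atTop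
            (nhds (Rhat φ)) := by
  set J : H →L[ℂ] Dhat := iota.extendOfNorm A.toFun
  have hJ : ∀ χ : A.domain, J (A χ) = iota χ :=
    LinearMap.extendOfNorm_eq (hA.denseRange_toFun hinj) ⟨1, fun χ => by simp [hiso]⟩
  have hlim : ∀ (ε : ℕ → ℝ), (∀ n, ε n ≠ 0) → Tendsto ε atTop (𝓝 0) →
      ∀ (R : ℕ → H →L[ℂ] H) (hR : ∀ n, IsResolvent A (I * (ε n : ℂ)) (R n)) (φ : H),
        Tendsto (fun n => iota ⟨R n φ, (hR n).mem φ⟩) atTop (𝓝 (-J φ)) := by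
    intro ε _ hε R hR φ
    simpa only [Function.comp_def, hJ, map_neg] using
      (J.continuous.tendsto _).comp (tendsto_apply_resolvent_apply hA hinj hε hR φ)
  exact ⟨fun ε hε₀ hε R hR φ => (hlim ε hε₀ hε R hR φ).cauchySeq, -J, hlim⟩

/-- Let `A` be densely defined, self-adjoint and injective, and let `D̂(A)`
(modelled by a Banach space `Dhat` together with a dense isometric embedding
`iota : D(A) → Dhat` for the norm `‖φ‖_(A) = ‖Aφ‖`) be the completion of `D(A)`.
For every sequence `(ε n)` of nonzero reals converging to `0` and every `φ ∈ H`, the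
sequence `(R(i ε n) φ)` is `‖·‖_(A)`-Cauchy in `D(A)`; there is a bounded linear map
`Rhat : H → D̂(A)` such that, for every such sequence, `𝓘 (R(i ε n) φ) → Rhat φ`
(in particular the limit does not depend on the chosen sequence). -/
theorem resolvent_cauchySeq_and_limit
    {H : Type*} [NormedAddCommGroup H] [InnerProductSpace ℂ H] [CompleteSpace H]
    (A : H →ₗ.[ℂ] H) (hA : IsSelfAdjoint A)
    (hinj : ∀ φ : A.domain, A φ = 0 → (φ : H) = 0)
    {Dhat : Type*} [NormedAddCommGroup Dhat] [NormedSpace ℂ Dhat] [CompleteSpace Dhat]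
    (iota : A.domain →ₗ[ℂ] Dhat)
    (hiso : ∀ φ : A.domain, ‖iota φ‖ = ‖A φ‖)
    (hdense : DenseRange iota) :
    (∀ (ε : ℕ → ℝ), (∀ n, ε n ≠ 0) → Filter.Tendsto ε Filter.atTop (nhds 0) →
      ∀ (R : ℕ → H →L[ℂ] H) (hR : ∀ n, IsResolvent A (Complex.I * (ε n : ℂ)) (R n)) (φ : H),
        CauchySeq (fun n => iota ⟨R n φ, (hR n).mem φ⟩)) ∧
    ∃ Rhat : H →L[ℂ] Dhat,
      ∀ (ε : ℕ → ℝ), (∀ n, ε n ≠ 0) → Filter.Tendsto ε Filter.atTop (nhds 0) →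
        ∀ (R : ℕ → H →L[ℂ] H) (hR : ∀ n, IsResolvent A (Complex.I * (ε n : ℂ)) (R n)) (φ : H),
          Filter.Tendsto (fun n => iota ⟨R n φ, (hR n).mem φ⟩) Filter.atTop
            (nhds (Rhat φ)) :=
  resolvent_cauchySeq_and_limit_general A hA hinj iota hiso

end SingPert
end
end

section
/- For every z ∈ ρ(A) and every ℓ ∈ X', the vectors (G(iε_n) − G(z))ℓ belong to D(A), form a Cauchy sequence with respect to the norm ‖ψ‖_(A) := ‖Aψ‖_H, and their limit in the completion D̂(A) equals K(z)ℓ := z R(G(z)ℓ). -/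
/-!
Writing `R(w)` for the resolvent, the resolvent identity together with the adjoint relation
`R(w)* = R(w̄)` turns the defining identity of `G` into
`(G(iεₙ) − G(z))ℓ = (z − iεₙ) R(iεₙ) G(z)ℓ`.
The right-hand side lies in `D(A)`, and its image in `D̂(A)` converges to `z R(G(z)ℓ)`
since `z − iεₙ → z` and `𝓘 R(iεₙ) φ → Rφ`; a convergent sequence is Cauchy.
-/

open Complex Filter Topology
open scoped InnerProductSpace ComplexConjugate

noncomputable section

namespace SingPert

theorem _root_.IsSelfAdjoint.isFormalAdjoint_self {H : Type*} [NormedAddCommGroup H]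
    [InnerProductSpace ℂ H] [CompleteSpace H] {A : H →ₗ.[ℂ] H} (hA : IsSelfAdjoint A) :
    A.IsFormalAdjoint A := by
  have h := LinearPMap.adjoint_isFormalAdjoint hA.dense_domain
  rwa [LinearPMap.isSelfAdjoint_def.mp hA] at h

namespace IsResolvent

variable {H : Type*} [NormedAddCommGroup H] [InnerProductSpace ℂ H] {A : H →ₗ.[ℂ] H}

theorem inner_map_left (hsym : A.IsFormalAdjoint A) {w : ℂ} {R R' : H →L[ℂ] H}
    (hR : IsResolvent A w R) (hR' : IsResolvent A (conj w) R') (φ ψ : H) :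
    ⟪R φ, ψ⟫_ℂ = ⟪φ, R' ψ⟫_ℂ := by
  set u : A.domain := ⟨R' ψ, hR'.mem ψ⟩
  set v : A.domain := ⟨R φ, hR.mem φ⟩
  calc ⟪R φ, ψ⟫_ℂ = ⟪(v : H), -A u + conj w • (u : H)⟫_ℂ := by rw [hR'.left ψ]
    _ = -⟪(v : H), A u⟫_ℂ + conj w * ⟪(v : H), (u : H)⟫_ℂ := by
        rw [inner_add_right, inner_neg_right, inner_smul_right]
    _ = -⟪A v, (u : H)⟫_ℂ + conj w * ⟪(v : H), (u : H)⟫_ℂ := by rw [hsym v u]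
    _ = ⟪-A v + w • (v : H), (u : H)⟫_ℂ := by
        rw [inner_add_left, inner_neg_left, inner_smul_left]
    _ = ⟪φ, R' ψ⟫_ℂ := by rw [hR.left φ]

theorem sub_apply {w w' : ℂ} {R R' : H →L[ℂ] H} (hR : IsResolvent A w R)
    (hR' : IsResolvent A w' R') (ψ : H) :
    R' ψ - R ψ = (w - w') • R (R' ψ) := by
  set u : A.domain := ⟨R' ψ, hR'.mem ψ⟩
  have hshift : -A u + w • (u : H) = ψ + (w - w') • (u : H) := by
    rw [← hR'.left ψ]; module
  have hu := hR.right u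
  rw [hshift, map_add, map_smul] at hu
  exact sub_eq_of_eq_add' hu.symm

/-- With `f = ℓ ∘ τ` this reads `G(w')ℓ − G(w)ℓ = (w − w') R(w') G(w)ℓ`. -/
theorem sub_eq_smul_of_inner_eq (hsym : A.IsFormalAdjoint A) {w w' : ℂ}
    {Rbar Rbar' R' : H →L[ℂ] H} (hRbar : IsResolvent A (conj w) Rbar)
    (hRbar' : IsResolvent A (conj w') Rbar') (hR' : IsResolvent A w' R')
    (f : A.domain →ₗ[ℂ] ℂ) {g g' : H}
    (hg : ∀ ψ, ⟪g, ψ⟫_ℂ = f ⟨Rbar ψ, hRbar.mem ψ⟩)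
    (hg' : ∀ ψ, ⟪g', ψ⟫_ℂ = f ⟨Rbar' ψ, hRbar'.mem ψ⟩) :
    g' - g = (w - w') • R' g := by
  refine ext_inner_right ℂ fun ψ => ?_
  have hdiff : (⟨Rbar' ψ, hRbar'.mem ψ⟩ : A.domain) - ⟨Rbar ψ, hRbar.mem ψ⟩
      = (conj w - conj w') • (⟨Rbar (Rbar' ψ), hRbar.mem _⟩ : A.domain) :=
    Subtype.ext (hRbar.sub_apply hRbar' ψ)
  calc ⟪g' - g, ψ⟫_ℂ
      = f ((⟨Rbar' ψ, hRbar'.mem ψ⟩ : A.domain) - ⟨Rbar ψ, hRbar.mem ψ⟩) := by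
        rw [inner_sub_left, hg, hg', map_sub]
    _ = (conj w - conj w') * ⟪g, Rbar' ψ⟫_ℂ := by rw [hdiff, map_smul, smul_eq_mul, hg]
    _ = ⟪(w - w') • R' g, ψ⟫_ℂ := by
        rw [← hR'.inner_map_left hsym hRbar', inner_smul_left, map_sub]

end IsResolvent

theorem G_diff_tendsto_K_general
    {H : Type*} [NormedAddCommGroup H] [InnerProductSpace ℂ H] [CompleteSpace H]
    {X : Type*} [NormedAddCommGroup X] [NormedSpace ℂ X]
    (A : H →ₗ.[ℂ] H) (hA : IsSelfAdjoint A)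
    (τ : A.domain →ₗ[ℂ] X)
    -- the completion `D̂(A)` of `D(A)` w.r.t. the norm `‖φ‖_(A) = ‖Aφ‖`
    {Dhat : Type*} [NormedAddCommGroup Dhat] [NormedSpace ℂ Dhat]
    (iota : A.domain →ₗ[ℂ] Dhat)
    -- a sequence of nonzero reals converging to `0`, with the associated resolvents
    (ε : ℕ → ℝ) (hεlim : Filter.Tendsto ε Filter.atTop (nhds 0))
    (Rn : ℕ → H →L[ℂ] H) (hRn : ∀ n, IsResolvent A (Complex.I * (ε n : ℂ)) (Rn n))
    (Rnbar : ℕ → H →L[ℂ] H) (hRnbar : ∀ n, IsResolvent A (-(Complex.I * (ε n : ℂ))) (Rnbar n))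
    -- `Rhat φ = lim 𝓘 (R(iεₙ) φ)`
    (Rhat : H →L[ℂ] Dhat)
    (hRhat : ∀ φ : H, Filter.Tendsto (fun n => iota ⟨Rn n φ, (hRn n).mem φ⟩)
      Filter.atTop (nhds (Rhat φ)))
    -- the maps `G(iεₙ)`, with `⟪G(iεₙ)ℓ, ψ⟫ = ℓ (τ (R(-iεₙ) ψ))`
    (Gn : ℕ → StrongDual ℂ X →SL[starRingEnd ℂ] H)
    (hGn : ∀ n, ∀ (ℓ : StrongDual ℂ X) (ψ : H),
      ⟪Gn n ℓ, ψ⟫_ℂ = ℓ (τ ⟨Rnbar n ψ, (hRnbar n).mem ψ⟩))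
    -- a point `z ∈ ρ(A)` and the map `G(z)`, with `⟪G(z)ℓ, ψ⟫ = ℓ (τ (R(z̄) ψ))`
    (z : ℂ) (Rzbar : H →L[ℂ] H)
    (hRzbar : IsResolvent A (starRingEnd ℂ z) Rzbar)
    (Gz : StrongDual ℂ X →SL[starRingEnd ℂ] H)
    (hGz : ∀ (ℓ : StrongDual ℂ X) (ψ : H),
      ⟪Gz ℓ, ψ⟫_ℂ = ℓ (τ ⟨Rzbar ψ, hRzbar.mem ψ⟩))
    (ℓ : StrongDual ℂ X) :
    ∃ hmem : ∀ n, Gn n ℓ - Gz ℓ ∈ A.domain,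
      CauchySeq (fun n => iota ⟨Gn n ℓ - Gz ℓ, hmem n⟩) ∧
      Filter.Tendsto (fun n => iota ⟨Gn n ℓ - Gz ℓ, hmem n⟩) Filter.atTop
        (nhds (z • Rhat (Gz ℓ))) := by
  have hkey : ∀ n, Gn n ℓ - Gz ℓ = (z - I * ε n) • Rn n (Gz ℓ) := fun n => by
    have hRnbar' : IsResolvent A (conj (I * ε n)) (Rnbar n) := by
      simpa [conj_I] using hRnbar n
    exact hRzbar.sub_eq_smul_of_inner_eq hA.isFormalAdjoint_self hRnbar' (hRn n)
      ((ℓ : X →L[ℂ] ℂ).toLinearMap ∘ₗ τ) (hGz ℓ) (hGn n ℓ)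
  have hmem : ∀ n, Gn n ℓ - Gz ℓ ∈ A.domain := fun n => by
    rw [hkey n]
    exact A.domain.smul_mem _ ((hRn n).mem _)
  have hseq : ∀ n, iota ⟨Gn n ℓ - Gz ℓ, hmem n⟩
      = (z - I * ε n) • iota ⟨Rn n (Gz ℓ), (hRn n).mem _⟩ := fun n => by
    rw [← map_smul]
    exact congrArg iota (Subtype.ext (hkey n))
  have hcoeff : Tendsto (fun n => z - I * ε n) atTop (𝓝 z) := by
    simpa using tendsto_const_nhds.sub (((continuous_ofReal.tendsto 0).comp hεlim).const_mul I)
  have hlim : Tendsto (fun n => iota ⟨Gn n ℓ - Gz ℓ, hmem n⟩) atTop (𝓝 (z • Rhat (Gz ℓ))) := by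
    simpa only [hseq] using hcoeff.smul (hRhat (Gz ℓ))
  exact ⟨hmem, hlim.cauchySeq, hlim⟩

/-- For every `z ∈ ρ(A)` and `ℓ ∈ X'`, the vectors `(G(iεₙ) − G(z))ℓ`
belong to `D(A)`, form a Cauchy sequence w.r.t. the norm `‖ψ‖_(A) = ‖Aψ‖` and converge, in
the completion `D̂(A)`, to `K(z)ℓ := z • Rhat (G(z)ℓ)`. -/
theorem G_diff_tendsto_K
    {H : Type*} [NormedAddCommGroup H] [InnerProductSpace ℂ H] [CompleteSpace H]
    {X : Type*} [NormedAddCommGroup X] [NormedSpace ℂ X] [CompleteSpace X]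
    (A : H →ₗ.[ℂ] H) (hA : IsSelfAdjoint A)
    (hinj : ∀ φ : A.domain, A φ = 0 → (φ : H) = 0)
    (τ : A.domain →ₗ[ℂ] X)
    (hτbdd : ∃ c : ℝ, ∀ φ : A.domain,
      ‖τ φ‖ ≤ c * Real.sqrt (‖(φ : H)‖ ^ 2 + ‖A φ‖ ^ 2))
    -- the completion `D̂(A)` of `D(A)` w.r.t. the norm `‖φ‖_(A) = ‖Aφ‖`
    {Dhat : Type*} [NormedAddCommGroup Dhat] [NormedSpace ℂ Dhat] [CompleteSpace Dhat]
    (iota : A.domain →ₗ[ℂ] Dhat)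
    (hiso : ∀ φ : A.domain, ‖iota φ‖ = ‖A φ‖)
    (hdense : DenseRange iota)
    -- a sequence of nonzero reals converging to `0`, with the associated resolvents
    (ε : ℕ → ℝ) (hε0 : ∀ n, ε n ≠ 0) (hεlim : Filter.Tendsto ε Filter.atTop (nhds 0))
    (Rn : ℕ → H →L[ℂ] H) (hRn : ∀ n, IsResolvent A (Complex.I * (ε n : ℂ)) (Rn n))
    (Rnbar : ℕ → H →L[ℂ] H) (hRnbar : ∀ n, IsResolvent A (-(Complex.I * (ε n : ℂ))) (Rnbar n))
    -- `Rhat φ = lim 𝓘 (R(iεₙ) φ)`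
    (Rhat : H →L[ℂ] Dhat)
    (hRhat : ∀ φ : H, Filter.Tendsto (fun n => iota ⟨Rn n φ, (hRn n).mem φ⟩)
      Filter.atTop (nhds (Rhat φ)))
    -- the maps `G(iεₙ)`, with `⟪G(iεₙ)ℓ, ψ⟫ = ℓ (τ (R(-iεₙ) ψ))`
    (Gn : ℕ → StrongDual ℂ X →SL[starRingEnd ℂ] H)
    (hGn : ∀ n, ∀ (ℓ : StrongDual ℂ X) (ψ : H),
      ⟪Gn n ℓ, ψ⟫_ℂ = ℓ (τ ⟨Rnbar n ψ, (hRnbar n).mem ψ⟩))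
    -- a point `z ∈ ρ(A)` and the map `G(z)`, with `⟪G(z)ℓ, ψ⟫ = ℓ (τ (R(z̄) ψ))`
    (z : ℂ) (Rz Rzbar : H →L[ℂ] H)
    (hRz : IsResolvent A z Rz) (hRzbar : IsResolvent A (starRingEnd ℂ z) Rzbar)
    (Gz : StrongDual ℂ X →SL[starRingEnd ℂ] H)
    (hGz : ∀ (ℓ : StrongDual ℂ X) (ψ : H),
      ⟪Gz ℓ, ψ⟫_ℂ = ℓ (τ ⟨Rzbar ψ, hRzbar.mem ψ⟩))
    (ℓ : StrongDual ℂ X) :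
    ∃ hmem : ∀ n, Gn n ℓ - Gz ℓ ∈ A.domain,
      CauchySeq (fun n => iota ⟨Gn n ℓ - Gz ℓ, hmem n⟩) ∧
      Filter.Tendsto (fun n => iota ⟨Gn n ℓ - Gz ℓ, hmem n⟩) Filter.atTop
        (nhds (z • Rhat (Gz ℓ))) :=
  G_diff_tendsto_K_general A hA τ iota ε hεlim Rn hRn Rnbar hRnbar Rhat hRhat Gn hGn z Rzbar hRzbar
    Gz hGz ℓ

end SingPert
end
end

section
/- For all w, z ∈ ρ(A) and all ℓ ∈ X', the element K(w)ℓ − K(z)ℓ of D̂(A) lies in the image of the canonical embedding 𝓘 : D(A) → D̂(A), and one has K(w)ℓ − K(z)ℓ = 𝓘((G(z) − G(w))ℓ). -/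
/-!
Pairing the defining identity of `G(z)` with `ψ = (-A + z̄)φ`, `φ ∈ D(A)`, gives
`⟪z G(z)ℓ, φ⟫ - ⟪G(z)ℓ, Aφ⟫ = ℓ(τφ)`, independently of `z`. Subtracting the identities for `z` and
`w` shows that `u := (G(z) - G(w))ℓ` lies in `D(A*) = D(A)` with `Au = z G(z)ℓ - w G(w)ℓ`.
On the other hand `R̂ ∘ A = -𝓘` on `D(A)`: `R(iε)Aφ = iε R(iε)φ - φ`, and the first term tends to
`0` in `D̂(A)` because symmetry of `A` gives `‖A R(iε)ψ‖ ≤ ‖ψ‖`.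
Applying this to `u` gives `𝓘u = -R̂(Au) = w R̂ G(w)ℓ - z R̂ G(z)ℓ`.
-/

open Complex Filter Topology
open scoped InnerProductSpace ComplexConjugate

noncomputable section

namespace SingPert

theorem _root_.IsSelfAdjoint.isFormalAdjoint_s5 {𝕜 E : Type*} [RCLike 𝕜] [NormedAddCommGroup E]
    [InnerProductSpace 𝕜 E] [CompleteSpace E] {A : E →ₗ.[𝕜] E} (hA : IsSelfAdjoint A) :
    A.IsFormalAdjoint A := by
  simpa only [LinearPMap.isSelfAdjoint_def.mp hA] using
    LinearPMap.adjoint_isFormalAdjoint hA.dense_domain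

theorem _root_.IsSelfAdjoint.exists_apply_eq_of_inner_apply {𝕜 E : Type*} [RCLike 𝕜]
    [NormedAddCommGroup E] [InnerProductSpace 𝕜 E] [CompleteSpace E] {A : E →ₗ.[𝕜] E}
    (hA : IsSelfAdjoint A) {u v : E} (h : ∀ φ : A.domain, ⟪v, (φ : E)⟫_𝕜 = ⟪u, A φ⟫_𝕜) :
    ∃ hu : u ∈ A.domain, A ⟨u, hu⟩ = v := by
  have hAdj : A.adjoint = A := hA
  have hu : u ∈ A.adjoint.domain := LinearPMap.mem_adjoint_domain_of_exists u ⟨v, h⟩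
  have hle : A.adjoint ≤ A := hAdj.le
  exact ⟨hle.1 hu, (hle.2 rfl).symm.trans (LinearPMap.adjoint_apply_eq hA.dense_domain ⟨u, hu⟩ h)⟩

section Resolvent

variable {H : Type*} [NormedAddCommGroup H] [InnerProductSpace ℂ H] {A : H →ₗ.[ℂ] H}

theorem IsResolvent.apply_apply {z : ℂ} {R : H →L[ℂ] H} (hR : IsResolvent A z R)
    (φ : A.domain) : R (A φ) = z • R φ - φ := by
  have h := hR.right φ
  rw [map_add, map_neg, map_smul] at h
  linear_combination (norm := module) -h

theorem IsResolvent.inner_smul_sub_inner_apply {z : ℂ} {R : H →L[ℂ] H}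
    (hR : IsResolvent A (conj z) R) {g : H} {f : A.domain → ℂ}
    (hg : ∀ ψ : H, ⟪g, ψ⟫_ℂ = f ⟨R ψ, hR.mem ψ⟩) (φ : A.domain) :
    ⟪z • g, (φ : H)⟫_ℂ - ⟪g, A φ⟫_ℂ = f φ := by
  have h := hg (-A φ + conj z • (φ : H))
  rw [show (⟨R _, hR.mem _⟩ : A.domain) = φ from Subtype.ext (hR.right φ), inner_add_right,
    inner_neg_right, inner_smul_right] at h
  rw [inner_smul_left, ← h]
  ring

theorem _root_.LinearPMap.IsFormalAdjoint.norm_neg_add_smul_sq (hA : A.IsFormalAdjoint A)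
    (t : ℝ) (φ : A.domain) :
    ‖-A φ + (I * t) • (φ : H)‖ ^ 2 = ‖A φ‖ ^ 2 + t ^ 2 * ‖(φ : H)‖ ^ 2 := by
  have him : (⟪A φ, (φ : H)⟫_ℂ).im = 0 :=
    conj_eq_iff_im.mp (by rw [inner_conj_symm, hA φ φ])
  have hre : RCLike.re ⟪-A φ, (I * t) • (φ : H)⟫_ℂ = 0 := by
    simp [him]
  rw [norm_add_sq (𝕜 := ℂ), hre, norm_neg, norm_smul, mul_pow]
  simp

theorem IsResolvent.norm_apply_le_of_isFormalAdjoint (hA : A.IsFormalAdjoint A) {t : ℝ}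
    {R : H →L[ℂ] H} (hR : IsResolvent A (I * t) R) (ψ : H) : ‖A ⟨R ψ, hR.mem ψ⟩‖ ≤ ‖ψ‖ := by
  have h := hA.norm_neg_add_smul_sq t ⟨R ψ, hR.mem ψ⟩
  rw [hR.left ψ] at h
  nlinarith [norm_nonneg ψ, norm_nonneg (A ⟨R ψ, hR.mem ψ⟩), sq_nonneg (t * ‖R ψ‖)]

theorem tendsto_resolvent_apply_apply (hA : A.IsFormalAdjoint A) {D : Type*}
    [NormedAddCommGroup D] [NormedSpace ℂ D] (iota : A.domain →ₗ[ℂ] D)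
    (hiota : ∀ φ : A.domain, ‖iota φ‖ ≤ ‖A φ‖) {ε : ℕ → ℝ} (hε : Tendsto ε atTop (𝓝 0))
    {Rn : ℕ → H →L[ℂ] H} (hRn : ∀ n, IsResolvent A (I * ε n) (Rn n)) (φ : A.domain) :
    Tendsto (fun n => iota ⟨Rn n (A φ), (hRn n).mem _⟩) atTop (𝓝 (-iota φ)) := by
  have hsplit : ∀ n, iota ⟨Rn n (A φ), (hRn n).mem _⟩
      = (I * ε n) • iota ⟨Rn n φ, (hRn n).mem _⟩ - iota φ := fun n => by
    rw [← map_smul, ← map_sub]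
    exact congrArg iota (Subtype.ext ((hRn n).apply_apply φ))
  have hsmall : Tendsto (fun n => (I * ε n) • iota ⟨Rn n φ, (hRn n).mem _⟩) atTop (𝓝 0) := by
    refine squeeze_zero_norm (a := fun n => |ε n| * ‖(φ : H)‖) (fun n => ?_) ?_
    · rw [norm_smul, norm_mul, norm_I, one_mul, norm_real, Real.norm_eq_abs]
      exact mul_le_mul_of_nonneg_left
        ((hiota _).trans ((hRn n).norm_apply_le_of_isFormalAdjoint hA φ)) (abs_nonneg _)
    · simpa using hε.abs.mul_const ‖(φ : H)‖
  simpa only [hsplit, zero_sub] using hsmall.sub_const (iota φ)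

end Resolvent

theorem K_diff_eq_G_diff_general
    {H : Type*} [NormedAddCommGroup H] [InnerProductSpace ℂ H] [CompleteSpace H]
    {X : Type*} [NormedAddCommGroup X] [NormedSpace ℂ X]
    (A : H →ₗ.[ℂ] H) (hA : IsSelfAdjoint A)
    (τ : A.domain →ₗ[ℂ] X)
    -- the completion `D̂(A)` of `D(A)` w.r.t. the norm `‖φ‖_(A) = ‖Aφ‖`
    {Dhat : Type*} [NormedAddCommGroup Dhat] [NormedSpace ℂ Dhat]
    (iota : A.domain →ₗ[ℂ] Dhat)
    (hiso : ∀ φ : A.domain, ‖iota φ‖ = ‖A φ‖)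
    -- a sequence of nonzero reals converging to `0`, with the associated resolvents
    (ε : ℕ → ℝ) (hεlim : Filter.Tendsto ε Filter.atTop (nhds 0))
    (Rn : ℕ → H →L[ℂ] H) (hRn : ∀ n, IsResolvent A (Complex.I * (ε n : ℂ)) (Rn n))
    -- `Rhat φ = lim 𝓘 (R(iεₙ) φ)`
    (Rhat : H →L[ℂ] Dhat)
    (hRhat : ∀ φ : H, Filter.Tendsto (fun n => iota ⟨Rn n φ, (hRn n).mem φ⟩)
      Filter.atTop (nhds (Rhat φ)))
    -- points `z, w ∈ ρ(A)` and the maps `G(z)`, `G(w)`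
    (z w : ℂ) (Rzbar Rwbar : H →L[ℂ] H)
    (hRzbar : IsResolvent A (starRingEnd ℂ z) Rzbar)
    (hRwbar : IsResolvent A (starRingEnd ℂ w) Rwbar)
    (Gz Gw : StrongDual ℂ X →SL[starRingEnd ℂ] H)
    (hGz : ∀ (ℓ : StrongDual ℂ X) (ψ : H),
      ⟪Gz ℓ, ψ⟫_ℂ = ℓ (τ ⟨Rzbar ψ, hRzbar.mem ψ⟩))
    (hGw : ∀ (ℓ : StrongDual ℂ X) (ψ : H),
      ⟪Gw ℓ, ψ⟫_ℂ = ℓ (τ ⟨Rwbar ψ, hRwbar.mem ψ⟩))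
    (ℓ : StrongDual ℂ X) :
    ∃ hmem : Gz ℓ - Gw ℓ ∈ A.domain,
      w • Rhat (Gw ℓ) - z • Rhat (Gz ℓ) = iota ⟨Gz ℓ - Gw ℓ, hmem⟩ := by
  obtain ⟨hmem, hAu⟩ := hA.exists_apply_eq_of_inner_apply
    (u := Gz ℓ - Gw ℓ) (v := z • Gz ℓ - w • Gw ℓ) fun φ => by
      have hz := hRzbar.inner_smul_sub_inner_apply (f := fun φ => ℓ (τ φ)) (hGz ℓ) φ
      have hw := hRwbar.inner_smul_sub_inner_apply (f := fun φ => ℓ (τ φ)) (hGw ℓ) φ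
      rw [inner_sub_left, inner_sub_left]
      linear_combination hz - hw
  refine ⟨hmem, ?_⟩
  have hRhatA := tendsto_nhds_unique (hRhat _)
    (tendsto_resolvent_apply_apply hA.isFormalAdjoint_s5 iota (fun φ => (hiso φ).le) hεlim hRn
      ⟨_, hmem⟩)
  rw [hAu, map_sub, map_smul, map_smul] at hRhatA
  rw [← neg_sub, hRhatA, neg_neg]

/-- For all `w, z ∈ ρ(A)` and `ℓ ∈ X'`, the element
`K(w)ℓ − K(z)ℓ ∈ D̂(A)` lies in the image of the canonical embedding `𝓘 : D(A) → D̂(A)`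
and `K(w)ℓ − K(z)ℓ = 𝓘((G(z) − G(w))ℓ)`, where `K(z) = z • (Rhat ∘ G(z))`. -/
theorem K_diff_eq_G_diff
    {H : Type*} [NormedAddCommGroup H] [InnerProductSpace ℂ H] [CompleteSpace H]
    {X : Type*} [NormedAddCommGroup X] [NormedSpace ℂ X] [CompleteSpace X]
    (A : H →ₗ.[ℂ] H) (hA : IsSelfAdjoint A)
    (hinj : ∀ φ : A.domain, A φ = 0 → (φ : H) = 0)
    (τ : A.domain →ₗ[ℂ] X)
    (hτbdd : ∃ c : ℝ, ∀ φ : A.domain,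
      ‖τ φ‖ ≤ c * Real.sqrt (‖(φ : H)‖ ^ 2 + ‖A φ‖ ^ 2))
    -- the completion `D̂(A)` of `D(A)` w.r.t. the norm `‖φ‖_(A) = ‖Aφ‖`
    {Dhat : Type*} [NormedAddCommGroup Dhat] [NormedSpace ℂ Dhat] [CompleteSpace Dhat]
    (iota : A.domain →ₗ[ℂ] Dhat)
    (hiso : ∀ φ : A.domain, ‖iota φ‖ = ‖A φ‖)
    (hdense : DenseRange iota)
    -- a sequence of nonzero reals converging to `0`, with the associated resolvents
    (ε : ℕ → ℝ) (hε0 : ∀ n, ε n ≠ 0) (hεlim : Filter.Tendsto ε Filter.atTop (nhds 0))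
    (Rn : ℕ → H →L[ℂ] H) (hRn : ∀ n, IsResolvent A (Complex.I * (ε n : ℂ)) (Rn n))
    -- `Rhat φ = lim 𝓘 (R(iεₙ) φ)`
    (Rhat : H →L[ℂ] Dhat)
    (hRhat : ∀ φ : H, Filter.Tendsto (fun n => iota ⟨Rn n φ, (hRn n).mem φ⟩)
      Filter.atTop (nhds (Rhat φ)))
    -- points `z, w ∈ ρ(A)` and the maps `G(z)`, `G(w)`
    (z w : ℂ) (Rz Rzbar Rw Rwbar : H →L[ℂ] H)
    (hRz : IsResolvent A z Rz) (hRzbar : IsResolvent A (starRingEnd ℂ z) Rzbar)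
    (hRw : IsResolvent A w Rw) (hRwbar : IsResolvent A (starRingEnd ℂ w) Rwbar)
    (Gz Gw : StrongDual ℂ X →SL[starRingEnd ℂ] H)
    (hGz : ∀ (ℓ : StrongDual ℂ X) (ψ : H),
      ⟪Gz ℓ, ψ⟫_ℂ = ℓ (τ ⟨Rzbar ψ, hRzbar.mem ψ⟩))
    (hGw : ∀ (ℓ : StrongDual ℂ X) (ψ : H),
      ⟪Gw ℓ, ψ⟫_ℂ = ℓ (τ ⟨Rwbar ψ, hRwbar.mem ψ⟩))
    (ℓ : StrongDual ℂ X) :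
    ∃ hmem : Gz ℓ - Gw ℓ ∈ A.domain,
      w • Rhat (Gw ℓ) - z • Rhat (Gz ℓ) = iota ⟨Gz ℓ - Gw ℓ, hmem⟩ :=
  K_diff_eq_G_diff_general A hA τ iota hiso ε hεlim Rn hRn Rhat hRhat z w Rzbar Rwbar hRzbar hRwbar
    Gz Gw hGz hGw ℓ

end SingPert
end
end
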